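/- arXiv:0903.4047 — 2 statements merged into one kernel-verified Lean document; each statement's English description precedes it below -/
import Mathlib

section
/- For 0 < r < 1 and c ∈ [−1/r, 1/r], the function (1 + c x)·k(x:r) on (−r, r) is a probability density, i.e., it is nonnegative on (−r,r) and integrates to 1. -/
/-!
The density has the explicit primitive
`(arcsin (x √(1 - r²) / (r √(1 - x²))) - c · arctan (√(r² - x²) / √(1 - r²))) / π`,
which is continuous on `[-r, r]` and takes the values `-1/2` at `-r` and `1/2` at `r`.
Since `|c x| ≤ 1`, the density is nonnegative, hence integrable as a nonnegative derivative,
and the fundamental theorem of calculus gives total mass `1`.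
-/

open Real Set

/-- The kernel `k(x:r)` of the paper. -/
noncomputable def konnoKernel (r x : ℝ) : ℝ :=
  √(1 - r ^ 2) / (π * (1 - x ^ 2) * √(r ^ 2 - x ^ 2))

lemma one_add_mul_nonneg_of_abs_le {r c x : ℝ} (hc : |c| ≤ 1 / r) (hx : |x| ≤ r) :
    0 ≤ 1 + c * x := by
  have hcx : |c * x| ≤ 1 := by
    rcases (abs_nonneg x).trans hx |>.eq_or_lt with rfl | hr
    · simp_all
    · calc |c * x| = |c| * |x| := abs_mul c x
        _ ≤ 1 / r * r := mul_le_mul hc hx (abs_nonneg x) (by positivity)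
        _ = 1 := one_div_mul_cancel hr.ne'
  linarith [neg_abs_le (c * x)]

lemma one_sub_sq_pos_of_mem_Ioo {r x : ℝ} (hr1 : r < 1) (hx : x ∈ Ioo (-r) r) :
    0 < 1 - x ^ 2 := by
  obtain ⟨h₁, h₂⟩ := hx
  nlinarith

lemma sq_sub_sq_pos_of_mem_Ioo {r x : ℝ} (hx : x ∈ Ioo (-r) r) : 0 < r ^ 2 - x ^ 2 := by
  obtain ⟨h₁, h₂⟩ := hx
  nlinarith

lemma konnoKernel_nonneg {r x : ℝ} (hr1 : r < 1) (hx : x ∈ Ioo (-r) r) :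
    0 ≤ konnoKernel r x := by
  have := one_sub_sq_pos_of_mem_Ioo hr1 hx
  unfold konnoKernel
  positivity

lemma one_add_mul_konnoKernel_nonneg {r c x : ℝ} (hr1 : r < 1) (hc : |c| ≤ 1 / r)
    (hx : x ∈ Ioo (-r) r) : 0 ≤ (1 + c * x) * konnoKernel r x :=
  mul_nonneg (one_add_mul_nonneg_of_abs_le hc (abs_le.mpr ⟨hx.1.le, hx.2.le⟩))
    (konnoKernel_nonneg hr1 hx)

lemma hasDerivAt_sqrt_sub_sq {a x : ℝ} (hx : 0 < a - x ^ 2) :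
    HasDerivAt (fun y => √(a - y ^ 2)) (-x / √(a - x ^ 2)) x := by
  convert ((hasDerivAt_pow 2 x).const_sub a).sqrt hx.ne' using 1
  field_simp
  ring

lemma hasDerivAt_arcsin_konno {r x : ℝ} (hr1 : r < 1) (hx : x ∈ Ioo (-r) r) :
    HasDerivAt (fun y => arcsin (y * √(1 - r ^ 2) / (r * √(1 - y ^ 2))))
      (π * konnoKernel r x) x := by
  have hr : 0 < r := by linarith [hx.1, hx.2]
  have hx1 := one_sub_sq_pos_of_mem_Ioo hr1 hx
  have hxr := sq_sub_sq_pos_of_mem_Ioo hx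
  unfold konnoKernel
  set s := √(1 - r ^ 2)
  set q := √(1 - x ^ 2)
  set p := √(r ^ 2 - x ^ 2)
  have hs : s ^ 2 = 1 - r ^ 2 := sq_sqrt (by nlinarith)
  have hq : q ^ 2 = 1 - x ^ 2 := sq_sqrt hx1.le
  have hp : p ^ 2 = r ^ 2 - x ^ 2 := sq_sqrt hxr.le
  have hq0 : 0 < q := sqrt_pos.mpr hx1
  have hp0 : 0 < p := sqrt_pos.mpr hxr
  have hφ : 1 - (x * s / (r * q)) ^ 2 = (p / (r * q)) ^ 2 := by
    field_simp
    linear_combination r ^ 2 * hq - x ^ 2 * hs - hp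
  have hφ_lt : |x * s / (r * q)| < 1 := by
    rw [← sq_lt_one_iff_abs_lt_one]
    nlinarith [show 0 < (p / (r * q)) ^ 2 by positivity]
  have hinner : HasDerivAt (fun y => y * s / (r * √(1 - y ^ 2)))
      ((1 * s * (r * q) - x * s * (r * (-x / q))) / (r * q) ^ 2) x :=
    ((hasDerivAt_id' x).mul_const s).fun_div ((hasDerivAt_sqrt_sub_sq hx1).const_mul r)
      (by positivity)
  obtain ⟨hφ₁, hφ₂⟩ := abs_lt.mp hφ_lt
  refine ((hasDerivAt_arcsin hφ₁.ne' hφ₂.ne).comp x hinner).congr_deriv ?_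
  rw [hφ, sqrt_sq (by positivity)]
  field_simp
  linear_combination (-(s * x ^ 2)) * hq

lemma hasDerivAt_arctan_konno {r x : ℝ} (hr1 : r < 1) (hx : x ∈ Ioo (-r) r) :
    HasDerivAt (fun y => arctan (√(r ^ 2 - y ^ 2) / √(1 - r ^ 2)))
      (-(π * x * konnoKernel r x)) x := by
  have hr : 0 < r := by linarith [hx.1, hx.2]
  have hr2 : 0 < 1 - r ^ 2 := by nlinarith
  have hx1 := one_sub_sq_pos_of_mem_Ioo hr1 hx
  have hxr := sq_sub_sq_pos_of_mem_Ioo hx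
  unfold konnoKernel
  set s := √(1 - r ^ 2)
  set p := √(r ^ 2 - x ^ 2)
  have hs : s ^ 2 = 1 - r ^ 2 := sq_sqrt hr2.le
  have hp : p ^ 2 = r ^ 2 - x ^ 2 := sq_sqrt hxr.le
  have hs0 : 0 < s := sqrt_pos.mpr hr2
  have hp0 : 0 < p := sqrt_pos.mpr hxr
  convert ((hasDerivAt_sqrt_sub_sq hxr).div_const s).arctan using 1
  field_simp
  linear_combination (-(x * p)) * (hs + hp)

noncomputable def konnoPrimitive (r c y : ℝ) : ℝ :=
  (arcsin (y * √(1 - r ^ 2) / (r * √(1 - y ^ 2)))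
    - c * arctan (√(r ^ 2 - y ^ 2) / √(1 - r ^ 2))) / π

lemma hasDerivAt_konnoPrimitive {r c x : ℝ} (hr1 : r < 1) (hx : x ∈ Ioo (-r) r) :
    HasDerivAt (konnoPrimitive r c) ((1 + c * x) * konnoKernel r x) x := by
  refine (((hasDerivAt_arcsin_konno hr1 hx).sub
    ((hasDerivAt_arctan_konno hr1 hx).const_mul c)).div_const π).congr_deriv ?_
  field_simp
  ring

lemma continuousOn_konnoPrimitive {r c : ℝ} (hr0 : 0 < r) (hr1 : r < 1) :
    ContinuousOn (konnoPrimitive r c) (Icc (-r) r) := by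
  have hden : ∀ y ∈ Icc (-r) r, r * √(1 - y ^ 2) ≠ 0 := fun y ⟨h₁, h₂⟩ => by
    have : 0 < 1 - y ^ 2 := by nlinarith
    positivity
  unfold konnoPrimitive
  fun_prop (disch := assumption)

lemma konnoPrimitive_self {r c : ℝ} (hr0 : 0 < r) (hr1 : r < 1) :
    konnoPrimitive r c r = 1 / 2 := by
  have : r * √(1 - r ^ 2) ≠ 0 := by
    have : 0 < 1 - r ^ 2 := by nlinarith
    positivity
  simp [konnoPrimitive, div_self this, div_div_cancel_left' pi_ne_zero]

lemma konnoPrimitive_neg_self {r c : ℝ} (hr0 : 0 < r) (hr1 : r < 1) :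
    konnoPrimitive r c (-r) = -(1 / 2) := by
  have : r * √(1 - r ^ 2) ≠ 0 := by
    have : 0 < 1 - r ^ 2 := by nlinarith
    positivity
  simp [konnoPrimitive, neg_div, div_self this, div_div_cancel_left' pi_ne_zero]

theorem integral_one_add_mul_konnoKernel {r c : ℝ} (hr0 : 0 < r) (hr1 : r < 1)
    (hc : |c| ≤ 1 / r) : ∫ x in (-r)..r, (1 + c * x) * konnoKernel r x = 1 := by
  have hr : -r ≤ r := by linarith
  have hderiv : ∀ x ∈ Ioo (-r) r,
      HasDerivAt (konnoPrimitive r c) ((1 + c * x) * konnoKernel r x) x :=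
    fun x hx => hasDerivAt_konnoPrimitive hr1 hx
  have hnonneg : ∀ x ∈ Ioo (-r) r, 0 ≤ (1 + c * x) * konnoKernel r x :=
    fun x hx => one_add_mul_konnoKernel_nonneg hr1 hc hx
  have hcont := continuousOn_konnoPrimitive (c := c) hr0 hr1
  rw [intervalIntegral.integral_eq_sub_of_hasDerivAt_of_le hr hcont hderiv
    (intervalIntegral.intervalIntegrable_deriv_of_nonneg (by rwa [uIcc_of_le hr])
      (by rwa [min_eq_left hr, max_eq_right hr]) (by rwa [min_eq_left hr, max_eq_right hr])),
    konnoPrimitive_self hr0 hr1, konnoPrimitive_neg_self hr0 hr1]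
  norm_num

theorem konno_asymmetric_density (r c : ℝ) (hr0 : 0 < r) (hr1 : r < 1)
    (hc : c ∈ Set.Icc (-(1/r)) (1/r)) :
    (∀ x ∈ Set.Ioo (-r) r,
      0 ≤ (1 + c * x) *
        (Real.sqrt (1 - r^2) / (Real.pi * (1 - x^2) * Real.sqrt (r^2 - x^2)))) ∧
    ∫ x in (-r)..r,
      (1 + c * x) *
        (Real.sqrt (1 - r^2) / (Real.pi * (1 - x^2) * Real.sqrt (r^2 - x^2))) = 1 := by
  have hc' : |c| ≤ 1 / r := abs_le.mpr hc
  exact ⟨fun x hx => one_add_mul_konnoKernel_nonneg hr1 hc' hx,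
    integral_one_add_mul_konnoKernel hr0 hr1 hc'⟩
end

section
/- For 0 < r < 1 and real z > 1, the Stieltjes transform of μ(r,c) equals ((z²−r²)(z+c) − (1+cz)√(1−r²)√(z²−r²)) / ((z²−1)(z²−r²)). -/
/-!
Partial fractions split `(1 + c x) / ((1 - x²)(z - x))` into multiples of `1/(1 - x)`, `1/(1 + x)`
and `1/(z - x)`, so everything reduces to `∫_{-r}^{r} dx / ((a ∓ x) √(r² - x²)) = π / √(a² - r²)`
for `a > r`. The integrand `1 / ((a - x) √(r² - x²))` has the primitive
`-arcsin ((r² - a x) / (r (a - x))) / √(a² - r²)`, whose Möbius argument runs from `1` to `-1` over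
`[-r, r]`; since the integrand is nonnegative, it is integrable although unbounded at `±r`.
-/

open Real Set MeasureTheory intervalIntegral

section CauchyKernel

variable {r a x : ℝ}

lemma one_sub_sq_moebius (hr : r ≠ 0) (hax : a - x ≠ 0) :
    1 - ((r^2 - a*x) / (r*(a-x)))^2 = (a^2 - r^2) * (r^2 - x^2) / (r*(a-x))^2 := by
  field_simp
  ring

theorem hasDerivAt_arcsin_moebius (hr : 0 < r) (hra : r < a) (hx : x ∈ Ioo (-r) r) :
    HasDerivAt (fun y => arcsin ((r^2 - a*y) / (r*(a-y))))
      (-(√(a^2 - r^2) / ((a - x) * √(r^2 - x^2)))) x := by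
  obtain ⟨hrx, hxr⟩ := hx
  have hax : 0 < a - x := by linarith
  have hr2x2 : 0 < r^2 - x^2 := by nlinarith
  have ha2r2 : 0 < a^2 - r^2 := by nlinarith
  have hmoeb : HasDerivAt (fun y => (r^2 - a*y) / (r*(a-y))) ((r^2 - a^2) / (r*(a-x)^2)) x := by
    have hnum : HasDerivAt (fun y => r^2 - a*y) (-a) x := by
      simpa using ((hasDerivAt_id x).const_mul a).const_sub (r^2)
    have hden : HasDerivAt (fun y => r*(a-y)) (-r) x := by
      simpa using ((hasDerivAt_id x).const_sub a).const_mul r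
    refine (hnum.div hden (by positivity)).congr_deriv ?_
    field_simp
    ring
  have hsq := one_sub_sq_moebius hr.ne' hax.ne'
  have hinside : 0 < 1 - ((r^2 - a*x) / (r*(a-x)))^2 := by rw [hsq]; positivity
  have hsqrt : √(1 - ((r^2 - a*x) / (r*(a-x)))^2) = √(a^2 - r^2) * √(r^2 - x^2) / (r*(a-x)) := by
    rw [hsq, sqrt_div (by positivity), sqrt_mul ha2r2.le, sqrt_sq (by positivity)]
  have hne_neg_one : (r^2 - a*x) / (r*(a-x)) ≠ -1 := fun h => by norm_num [h] at hinside
  have hne_one : (r^2 - a*x) / (r*(a-x)) ≠ 1 := fun h => by norm_num [h] at hinside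
  refine ((hasDerivAt_arcsin hne_neg_one hne_one).comp x hmoeb).congr_deriv ?_
  rw [hsqrt]
  have hS : √(a^2 - r^2) ^ 2 = a^2 - r^2 := sq_sqrt ha2r2.le
  have : 0 < √(r^2 - x^2) := sqrt_pos.2 hr2x2
  have : 0 < √(a^2 - r^2) := sqrt_pos.2 ha2r2
  field_simp
  linear_combination hS

theorem hasDerivAt_neg_arcsin_moebius_div (hr : 0 < r) (hra : r < a) (hx : x ∈ Ioo (-r) r) :
    HasDerivAt (fun y => -arcsin ((r^2 - a*y) / (r*(a-y))) / √(a^2 - r^2))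
      ((a - x) * √(r^2 - x^2))⁻¹ x := by
  have : 0 < √(a^2 - r^2) := sqrt_pos.2 (by nlinarith)
  exact ((hasDerivAt_arcsin_moebius hr hra hx).neg.div_const _).congr_deriv (by field_simp)

theorem continuousOn_neg_arcsin_moebius_div (hr : 0 < r) (hra : r < a) :
    ContinuousOn (fun y => -arcsin ((r^2 - a*y) / (r*(a-y))) / √(a^2 - r^2)) (Icc (-r) r) := by
  have hden : ∀ y ∈ Icc (-r) r, r*(a-y) ≠ 0 := fun y hy => by
    have : 0 < a - y := by linarith [hy.2]
    positivity
  exact (continuous_arcsin.comp_continuousOn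
    ((continuousOn_const.sub (continuousOn_const.mul continuousOn_id)).div
      (continuousOn_const.mul (continuousOn_const.sub continuousOn_id)) hden)).neg.div_const _

theorem intervalIntegrable_inv_sub_mul_sqrt (hr : 0 < r) (hra : r < a) :
    IntervalIntegrable (fun x => ((a - x) * √(r^2 - x^2))⁻¹) volume (-r) r := by
  have hrr : -r ≤ r := by linarith
  refine intervalIntegrable_deriv_of_nonneg
    (g := fun y => -arcsin ((r^2 - a*y) / (r*(a-y))) / √(a^2 - r^2))
    (g' := fun x => ((a - x) * √(r^2 - x^2))⁻¹)
    (by simpa only [uIcc_of_le hrr] using continuousOn_neg_arcsin_moebius_div hr hra)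
    (fun x hx => ?_) (fun x hx => ?_) <;> rw [min_eq_left hrr, max_eq_right hrr] at hx
  · exact hasDerivAt_neg_arcsin_moebius_div hr hra hx
  · have : 0 < a - x := by linarith [hx.2]
    exact inv_nonneg.2 (mul_nonneg this.le (sqrt_nonneg _))

theorem integral_inv_sub_mul_sqrt (hr : 0 < r) (hra : r < a) :
    ∫ x in (-r)..r, ((a - x) * √(r^2 - x^2))⁻¹ = π / √(a^2 - r^2) := by
  rw [integral_eq_sub_of_hasDerivAt_of_le (by linarith) (continuousOn_neg_arcsin_moebius_div hr hra)
    (fun x hx => hasDerivAt_neg_arcsin_moebius_div hr hra hx)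
    (intervalIntegrable_inv_sub_mul_sqrt hr hra)]
  have hright : (r^2 - a*r) / (r*(a-r)) = -1 := by
    rw [div_eq_iff (by nlinarith)]
    ring
  have hleft : (r^2 - a*(-r)) / (r*(a-(-r))) = 1 := by
    rw [div_eq_one_iff_eq (by nlinarith)]
    ring
  rw [hright, hleft, arcsin_neg_one, arcsin_one]
  ring

theorem intervalIntegrable_inv_add_mul_sqrt (hr : 0 < r) (hra : r < a) :
    IntervalIntegrable (fun x => ((a + x) * √(r^2 - x^2))⁻¹) volume (-r) r := by
  have := (IntervalIntegrable.iff_comp_neg).mp (intervalIntegrable_inv_sub_mul_sqrt hr hra)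
  simpa only [neg_neg, sub_neg_eq_add, neg_sq] using this.symm

theorem integral_inv_add_mul_sqrt (hr : 0 < r) (hra : r < a) :
    ∫ x in (-r)..r, ((a + x) * √(r^2 - x^2))⁻¹ = π / √(a^2 - r^2) := by
  have := integral_comp_neg (a := -r) (b := r) fun x => ((a - x) * √(r^2 - x^2))⁻¹
  simp only [neg_neg, sub_neg_eq_add, neg_sq] at this
  rw [this, integral_inv_sub_mul_sqrt hr hra]

end CauchyKernel

theorem stieltjes_density_eq_partial_fractions {r c z x : ℝ} (hr1 : r < 1) (hz : 1 < z)
    (hx : x ∈ Ioo (-r) r) :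
    ((1 + c * x) * (√(1 - r^2) / (π * (1 - x^2) * √(r^2 - x^2)))) / (z - x)
      = √(1 - r^2) / π * ((1 + c) / (2 * (z - 1)) * ((1 - x) * √(r^2 - x^2))⁻¹
        + (1 - c) / (2 * (z + 1)) * ((1 + x) * √(r^2 - x^2))⁻¹
        + (1 + c * z) / (1 - z^2) * ((z - x) * √(r^2 - x^2))⁻¹) := by
  obtain ⟨hrx, hxr⟩ := hx
  have : 0 < √(r^2 - x^2) := sqrt_pos.2 (by nlinarith)
  have : 1 - x ≠ 0 := by linarith
  have : 1 + x ≠ 0 := by linarith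
  have : z - x ≠ 0 := by linarith
  have : z - 1 ≠ 0 := by linarith
  have : z + 1 ≠ 0 := by linarith
  have : 1 - z^2 ≠ 0 := by nlinarith
  have : 1 - x^2 ≠ 0 := by nlinarith
  field_simp
  ring

theorem asymmetric_stieltjes_transform_general (r c : ℝ) (hr0 : 0 < r) (hr1 : r < 1)
    (z : ℝ) (hz : 1 < z) :
    ∫ x in (-r)..r,
      ((1 + c * x) *
        (Real.sqrt (1 - r^2) / (Real.pi * (1 - x^2) * Real.sqrt (r^2 - x^2)))) / (z - x)
    = ((z^2 - r^2) * (z + c)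
        - (1 + c * z) * Real.sqrt (1 - r^2) * Real.sqrt (z^2 - r^2)) /
        ((z^2 - 1) * (z^2 - r^2)) := by
  have hrz : r < z := hr1.trans hz
  rw [integral_congr_Ioo_of_le (by linarith)
    fun x hx => stieltjes_density_eq_partial_fractions (c := c) hr1 hz hx]
  have hK1 := intervalIntegrable_inv_sub_mul_sqrt hr0 hr1
  have hKz := intervalIntegrable_inv_sub_mul_sqrt hr0 hrz
  have hK1' := intervalIntegrable_inv_add_mul_sqrt hr0 hr1
  rw [intervalIntegral.integral_const_mul,
    integral_add ((hK1.const_mul _).add (hK1'.const_mul _)) (hKz.const_mul _),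
    integral_add (hK1.const_mul _) (hK1'.const_mul _)]
  simp only [intervalIntegral.integral_const_mul]
  rw [integral_inv_sub_mul_sqrt hr0 hr1, integral_inv_sub_mul_sqrt hr0 hrz,
    integral_inv_add_mul_sqrt hr0 hr1]
  have : 0 < √(1 - r^2) := sqrt_pos.2 (by nlinarith)
  have : 0 < √(z^2 - r^2) := sqrt_pos.2 (by nlinarith)
  have : z - 1 ≠ 0 := by linarith
  have : z + 1 ≠ 0 := by linarith
  have : 1 - z^2 ≠ 0 := by nlinarith
  have : z^2 - 1 ≠ 0 := by nlinarith
  set t := √(z^2 - r^2)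
  rw [show z^2 - r^2 = t^2 from (sq_sqrt (by nlinarith)).symm]
  field_simp
  ring

theorem asymmetric_stieltjes_transform (r c : ℝ) (hr0 : 0 < r) (hr1 : r < 1)
    (hc : c ∈ Set.Icc (-(1/r)) (1/r)) (z : ℝ) (hz : 1 < z) :
    ∫ x in (-r)..r,
      ((1 + c * x) *
        (Real.sqrt (1 - r^2) / (Real.pi * (1 - x^2) * Real.sqrt (r^2 - x^2)))) / (z - x)
    = ((z^2 - r^2) * (z + c)
        - (1 + c * z) * Real.sqrt (1 - r^2) * Real.sqrt (z^2 - r^2)) /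
        ((z^2 - 1) * (z^2 - r^2)) :=
  asymmetric_stieltjes_transform_general r c hr0 hr1 z hz
end
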